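/- Suppose (aₙ) is a complex sequence with ∑ |aₙ| n^{-c} < ∞ for some c > 0. Then for every y > 0, ∑_{n=1}^∞ aₙ e^{-ny} = (1/(2πi)) ∫_{c - i∞}^{c + i∞} Γ(s) A(s) y^{-s} ds, where A(s) = ∑ₙ aₙ n^{-s} (Mellin inversion for Lambert/exponential series). -/

import Mathlib

/-!
Since `Γ` is the Mellin transform of `u ↦ e^{-u}`, Mellin inversion on the line `Re s = c` gives
`e^{-x} = (1/2π) ∫ Γ(c+it) x^{-(c+it)} dt` for `x > 0`. Inversion applies because `Γ` is integrable
on vertical lines: `Γ(s) = Γ(s+2) / (s(s+1))` and `‖Γ(s+2)‖ ≤ Γ(c+2)`, so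
`‖Γ(c+it)‖ ≤ Γ(c+2) / (c² + t²)`. Put `x = n y`, multiply by `aₙ` and sum over `n`: the `n`-th
integrand has norm `‖Γ(c+it)‖ y^{-c} ‖aₙ‖ n^{-c}`, which is integrable in `t` and summable in `n`,
so the sum may be moved inside the integral, where it becomes the Dirichlet series `A(c+it)`.
-/

open Complex MeasureTheory

namespace Complex

lemma norm_Gamma_le_Gamma_re {z : ℂ} (hz : 0 < z.re) : ‖Gamma z‖ ≤ Real.Gamma z.re := by
  rw [Gamma_eq_integral hz, GammaIntegral, Real.Gamma_eq_integral hz]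
  refine (norm_integral_le_integral_norm _).trans_eq <|
    setIntegral_congr_fun measurableSet_Ioi fun x hx => ?_
  rw [norm_mul, norm_real, Real.norm_of_nonneg (Real.exp_pos _).le,
    norm_cpow_eq_rpow_re_of_pos hx, sub_re, one_re]

lemma continuous_Gamma_vertical {c : ℝ} (hc : 0 < c) :
    Continuous fun t : ℝ => Gamma (c + t * I) := by
  refine continuous_iff_continuousAt.mpr fun t => (continuousAt_Gamma _ fun m h => ?_).comp
    (by fun_prop)
  have : c = -(m : ℝ) := by simpa using congrArg re h
  linarith [Nat.cast_nonneg (α := ℝ) m]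

lemma norm_Gamma_vertical_le {c : ℝ} (hc : 0 < c) (t : ℝ) :
    ‖Gamma (c + t * I)‖ ≤ Real.Gamma (c + 2) / (c ^ 2 + t ^ 2) := by
  set s : ℂ := c + t * I
  have hs_re : s.re = c := by simp [s]
  have hs_im : s.im = t := by simp [s]
  have hs0 : s ≠ 0 := fun h => by simp [h] at hs_re; linarith
  have hs1 : s + 1 ≠ 0 := fun h => by
    have := congrArg re h; simp only [add_re, hs_re, one_re, zero_re] at this; linarith
  have hΓ : Gamma (s + 2) = s * (s + 1) * Gamma s := by
    rw [show s + 2 = s + 1 + 1 by ring, Gamma_add_one _ hs1, Gamma_add_one _ hs0]; ring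
  have hnum : ‖Gamma (s + 2)‖ ≤ Real.Gamma (c + 2) := by
    simpa [hs_re] using norm_Gamma_le_Gamma_re (z := s + 2) (by simp [hs_re]; linarith)
  have hden : c ^ 2 + t ^ 2 ≤ ‖s * (s + 1)‖ := by
    have hsq : ‖s‖ ^ 2 = c ^ 2 + t ^ 2 := by
      rw [← normSq_eq_norm_sq, normSq_apply, hs_re, hs_im]; ring
    have hle : ‖s‖ ≤ ‖s + 1‖ := by
      rw [← sq_le_sq₀ (norm_nonneg _) (norm_nonneg _), ← normSq_eq_norm_sq, ← normSq_eq_norm_sq,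
        normSq_apply, normSq_apply]
      simp only [add_re, add_im, one_re, one_im, hs_re, hs_im]
      nlinarith
    calc c ^ 2 + t ^ 2 = ‖s‖ * ‖s‖ := by rw [← hsq, sq]
      _ ≤ ‖s‖ * ‖s + 1‖ := by gcongr
      _ = ‖s * (s + 1)‖ := (norm_mul _ _).symm
  have hpos : 0 < c ^ 2 + t ^ 2 := by positivity
  rw [le_div_iff₀ hpos]
  calc ‖Gamma s‖ * (c ^ 2 + t ^ 2) ≤ ‖Gamma s‖ * ‖s * (s + 1)‖ := by gcongr
    _ = ‖Gamma (s + 2)‖ := by rw [hΓ, norm_mul _ (Gamma s), mul_comm]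
    _ ≤ Real.Gamma (c + 2) := hnum

lemma verticalIntegrable_Gamma {c : ℝ} (hc : 0 < c) : VerticalIntegrable Gamma c := by
  have hmajorant : Integrable fun t : ℝ => Real.Gamma (c + 2) / (c ^ 2 + t ^ 2) := by
    refine ((integrable_inv_one_add_sq.comp_div hc.ne').const_mul
      (Real.Gamma (c + 2) / c ^ 2)).congr (.of_forall fun t => ?_)
    field_simp
  exact hmajorant.mono' (continuous_Gamma_vertical hc).aestronglyMeasurable
    (.of_forall (norm_Gamma_vertical_le hc))

lemma mellinInv_Gamma {c : ℝ} (hc : 0 < c) {x : ℝ} (hx : 0 < x) :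
    mellinInv c Gamma x = exp (-x) := by
  set f : ℝ → ℂ := fun u => ((Real.exp (-u) : ℝ) : ℂ)
  have hmellin (t : ℝ) : mellin f (c + t * I) = Gamma (c + t * I) := by
    rw [← GammaIntegral_eq_mellin, Gamma_eq_integral (by simpa)]
  have hf : MellinConvergent f c := by
    refine (GammaIntegral_convergent (s := (c : ℂ)) (by simpa)).congr_fun (fun u _ => ?_)
      measurableSet_Ioi
    simp [f, mul_comm]
  have hFf : VerticalIntegrable (mellin f) c :=
    (verticalIntegrable_Gamma hc).congr (.of_forall fun t => (hmellin t).symm)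
  have hinv := mellinInv_mellin_eq c f hx hf hFf (by fun_prop)
  simp only [mellinInv, hmellin] at hinv ⊢
  simpa [f] using hinv

lemma VerticalIntegrable.integrable_cpow_smul {E : Type*} [NormedAddCommGroup E]
    [NormedSpace ℂ E] {f : ℂ → E} {σ : ℝ} (hf : VerticalIntegrable f σ) {x : ℝ} (hx : 0 < x) :
    Integrable fun t : ℝ => (x : ℂ) ^ (-(σ + t * I)) • f (σ + t * I) := by
  refine hf.bdd_smul (x ^ (-σ)) ?_ (.of_forall fun t => ?_)
  · exact ((by fun_prop : Continuous fun t : ℝ => -((σ : ℂ) + t * I)).const_cpow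
      (.inl (ofReal_ne_zero.mpr hx.ne'))).aestronglyMeasurable
  · simp [norm_cpow_eq_rpow_re_of_pos hx]

end Complex

lemma integral_mul_tsum_div_natCast_cpow {g : ℝ → ℂ} (hg : Integrable g) {a : ℕ → ℂ} {c : ℝ}
    (ha : Summable fun n : ℕ => ‖a (n + 1)‖ / ((n + 1 : ℝ)) ^ c) :
    ∫ t, g t * ∑' n : ℕ, a (n + 1) / ((n + 1 : ℕ) : ℂ) ^ ((c : ℂ) + t * I) =
      ∑' n : ℕ, a (n + 1) * ∫ t, g t / ((n + 1 : ℕ) : ℂ) ^ ((c : ℂ) + t * I) := by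
  set F : ℕ → ℝ → ℂ := fun n t => g t * (a (n + 1) / ((n + 1 : ℕ) : ℂ) ^ ((c : ℂ) + t * I))
  have hnorm (n : ℕ) (t : ℝ) : ‖F n t‖ = ‖g t‖ * (‖a (n + 1)‖ / ((n + 1 : ℝ)) ^ c) := by
    rw [norm_mul, norm_div, norm_natCast_cpow_of_pos n.succ_pos]
    simp
  have hF_int (n : ℕ) : Integrable (F n) := by
    refine (hg.norm.mul_const _).mono' ?_ (.of_forall fun t => (hnorm n t).le)
    refine hg.aestronglyMeasurable.mul (Continuous.aestronglyMeasurable ?_)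
    have hn : ((n + 1 : ℕ) : ℂ) ≠ 0 := Nat.cast_ne_zero.mpr n.succ_ne_zero
    exact continuous_const.div ((by fun_prop : Continuous fun t : ℝ => (c : ℂ) + t * I).const_cpow
      (.inl hn)) fun _ => by simpa using natCast_add_one_cpow_ne_zero n _
  have hF_sum : Summable fun n => ∫ t, ‖F n t‖ := by
    simp_rw [hnorm, integral_mul_const]
    exact ha.mul_left _
  calc ∫ t, g t * ∑' n : ℕ, a (n + 1) / ((n + 1 : ℕ) : ℂ) ^ ((c : ℂ) + t * I)
      = ∫ t, ∑' n, F n t := by simp_rw [F, tsum_mul_left]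
    _ = ∑' n, ∫ t, F n t := (integral_tsum_of_summable_integral_norm hF_int hF_sum).symm
    _ = _ := by
      congr 1 with n
      rw [← integral_const_mul]
      congr 1 with t
      ring

lemma exp_neg_mul_eq_integral_Gamma {c : ℝ} (hc : 0 < c) {x y : ℝ} (hx : 0 < x) (hy : 0 < y) :
    exp (-x * y) = (1 / (2 * Real.pi)) *
      ∫ t : ℝ, (y : ℂ) ^ (-((c : ℂ) + t * I)) • Gamma (c + t * I) /
        (x : ℂ) ^ ((c : ℂ) + t * I) := by
  rw [neg_mul, ← ofReal_mul, ← mellinInv_Gamma hc (mul_pos hx hy), mellinInv, real_smul]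
  push_cast
  congr 2 with t
  rw [smul_eq_mul, smul_eq_mul, mul_cpow_ofReal_nonneg hx.le hy.le, cpow_neg, cpow_neg]
  ring

/-- Mellin inversion for Lambert/exponential series: for y > 0,
∑ aₙ e^{-ny} = (1/2πi) ∫_(c) Γ(s) A(s) y^{-s} ds, the line integral written as
(1/2π) ∫_ℝ Γ(c+it) A(c+it) y^{-(c+it)} dt. -/
theorem stmt_11 (a : ℕ → ℂ) (c : ℝ) (hc : 0 < c)
    (ha : Summable (fun n : ℕ => ‖a (n + 1)‖ / ((n + 1 : ℝ)) ^ c))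
    (y : ℝ) (hy : 0 < y) :
    ∑' n : ℕ, a (n + 1) * Complex.exp (-((n + 1 : ℕ) : ℂ) * y) =
      (1 / (2 * Real.pi)) *
        ∫ t : ℝ, Complex.Gamma (c + t * I) *
          (∑' n : ℕ, a (n + 1) / ((n + 1 : ℕ) : ℂ) ^ ((c : ℂ) + t * I)) *
          (y : ℂ) ^ (-((c : ℂ) + t * I)) := by
  have hg := (verticalIntegrable_Gamma hc).integrable_cpow_smul hy
  calc ∑' n : ℕ, a (n + 1) * exp (-((n + 1 : ℕ) : ℂ) * y)
      = (1 / (2 * Real.pi)) * ∑' n : ℕ, a (n + 1) * ∫ t : ℝ,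
          (y : ℂ) ^ (-((c : ℂ) + t * I)) • Gamma (c + t * I) /
            ((n + 1 : ℕ) : ℂ) ^ ((c : ℂ) + t * I) := by
        rw [← tsum_mul_left]
        congr 1 with n
        rw [← ofReal_natCast, exp_neg_mul_eq_integral_Gamma hc (by positivity) hy, ofReal_natCast]
        ring
    _ = _ := by
        rw [← integral_mul_tsum_div_natCast_cpow hg ha]
        congr 2 with t
        rw [smul_eq_mul]
        ring
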